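/- arXiv:2411.18236 — 2 statements merged into one kernel-verified Lean document; each statement's English description precedes it below -/
import Mathlib

section
/- Let h : D([0,1],ℝ) × C₀↑([0,1],ℝ) → D([0,1],ℝ) be defined by h(x,y) = x/y, where C₀↑([0,1],ℝ) is the set of continuous nondecreasing functions y on [0,1] with y(0) > 0. Then h is continuous when the domain carries the product (weak M₁) topology and the codomain carries the M₁ topology. -/
/-! Dividing by a continuous `y > 0` acts on completed graphs through `(t, v) ↦ (t, v / y t)`,
so a parametric representation `(r, u)` of `x` gives the representation `(r, u / y ∘ r)` of
`x / y`, and conversely with multiplication. Since `y` is continuous, `y'` being `M₁`-close to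
`y` forces `y' (t) ≈ y (t')` uniformly for `t ≈ t'`. Hence close representations of `x`, `x'`
yield close representations of `x / y`, `x' / y'`, by the estimate for `u / a - u' / b` with
`a ≥ y 0 > 0` and `u` bounded on the graph of `x`. When `x / y` or `x' / y'` has no
parametric representation, `dM1` is the junk value `sInf ∅ = 0`. -/

open Set Filter

/-- A real-valued càdlàg function on `[0,1]` (values outside `[0,1]` are irrelevant):
right-continuous on `[0,1)` and with finite left limits on `(0,1]`. -/
structure Cadlag where
  toFun : ℝ → ℝ
  rightCont : ∀ t ∈ Set.Ico (0:ℝ) 1, ContinuousWithinAt toFun (Set.Ici t) t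
  leftLimEx : ∀ t ∈ Set.Ioc (0:ℝ) 1, ∃ L : ℝ,
    Tendsto toFun (nhdsWithin t (Set.Iio t)) (nhds L)

/-- The left limit `x(t-)`, with the convention `x(0-) = x(0)`. -/
noncomputable def Cadlag.llim (x : Cadlag) (t : ℝ) : ℝ :=
  if t = 0 then x.toFun 0 else Function.leftLim x.toFun t

/-- The completed (thin) graph `Γ_x` of `x`. -/
def Cadlag.graph (x : Cadlag) : Set (ℝ × ℝ) :=
  {p | p.1 ∈ Set.Icc (0:ℝ) 1 ∧ p.2 ∈ segment ℝ (x.llim p.1) (x.toFun p.1)}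

/-- `(r, u)` is a (strong) parametric representation of the completed graph of `x`:
a continuous map on `[0,1]`, with nondecreasing time component, mapping `[0,1]`
onto `Γ_x`. -/
def IsParamRep (x : Cadlag) (r u : ℝ → ℝ) : Prop :=
  ContinuousOn r (Set.Icc 0 1) ∧ ContinuousOn u (Set.Icc 0 1) ∧
    MonotoneOn r (Set.Icc 0 1) ∧
    (fun s => (r s, u s)) '' Set.Icc (0:ℝ) 1 = x.graph

/-- The Skorokhod `M₁` distance on `D([0,1],ℝ)`. -/
noncomputable def dM1 (x y : Cadlag) : ℝ :=
  sInf {d : ℝ | ∃ r₁ u₁ r₂ u₂ : ℝ → ℝ, IsParamRep x r₁ u₁ ∧ IsParamRep y r₂ u₂ ∧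
    d = ⨆ s : Set.Icc (0:ℝ) 1, max |r₁ s - r₂ s| |u₁ s - u₂ s|}

/-- The uniform distance on `D([0,1],ℝ)`. -/
noncomputable def unifDist (x y : Cadlag) : ℝ :=
  ⨆ t : Set.Icc (0:ℝ) 1, |x.toFun t - y.toFun t|

/-- Membership in `C₀↑([0,1],ℝ)`: continuous, nondecreasing, strictly positive at `0`. -/
def InC0up (y : Cadlag) : Prop :=
  ContinuousOn y.toFun (Set.Icc 0 1) ∧ MonotoneOn y.toFun (Set.Icc 0 1) ∧ 0 < y.toFun 0

/-- `q` is the pointwise quotient `x / y` on `[0,1]`. -/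
def IsQuot (x y q : Cadlag) : Prop :=
  ∀ t ∈ Set.Icc (0:ℝ) 1, q.toFun t = x.toFun t / y.toFun t

open Topology

lemma image_mul_const_segment (a b c : ℝ) :
    (fun v => v * c) '' segment ℝ a b = segment ℝ (a * c) (b * c) :=
  image_segment ℝ (LinearMap.mulRight ℝ c).toAffineMap a b

lemma tendsto_nhdsLT_of_continuousOn_Icc {f : ℝ → ℝ} (hf : ContinuousOn f (Icc 0 1)) {t : ℝ}
    (ht : t ∈ Ioc (0:ℝ) 1) : Tendsto f (𝓝[<] t) (𝓝 (f t)) :=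
  (hf t (Ioc_subset_Icc_self ht)).mono_of_mem_nhdsWithin <|
    mem_of_superset (Ioo_mem_nhdsLT ht.1) fun _ hs => ⟨hs.1.le, hs.2.le.trans ht.2⟩

namespace Cadlag

lemma mem_graph (x : Cadlag) {t : ℝ} (ht : t ∈ Icc (0:ℝ) 1) : (t, x.toFun t) ∈ x.graph :=
  ⟨ht, right_mem_segment ℝ _ _⟩

lemma llim_eq_of_tendsto (x : Cadlag) {t L : ℝ} (ht : 0 < t)
    (h : Tendsto x.toFun (𝓝[<] t) (𝓝 L)) : x.llim t = L := by
  rw [llim, if_neg ht.ne']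
  exact leftLim_eq_of_tendsto h

lemma llim_eq_of_continuousOn {y : Cadlag} (hy : ContinuousOn y.toFun (Icc 0 1)) {t : ℝ}
    (ht : t ∈ Icc (0:ℝ) 1) : y.llim t = y.toFun t := by
  rcases ht.1.eq_or_lt with rfl | h0
  · simp [llim]
  · exact y.llim_eq_of_tendsto h0 (tendsto_nhdsLT_of_continuousOn_Icc hy ⟨h0, ht.2⟩)

lemma graph_eq_of_continuousOn {y : Cadlag} (hy : ContinuousOn y.toFun (Icc 0 1)) :
    y.graph = (fun t => (t, y.toFun t)) '' Icc (0:ℝ) 1 := by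
  ext ⟨t, w⟩
  simp only [graph, mem_ofPred_eq, mem_image, Prod.mk.injEq]
  constructor
  · rintro ⟨ht, hw⟩
    rw [llim_eq_of_continuousOn hy ht, segment_same, mem_singleton_iff] at hw
    exact ⟨t, ht, rfl, hw.symm⟩
  · rintro ⟨t, ht, rfl, rfl⟩
    exact y.mem_graph ht

lemma eq_of_mem_graph {y : Cadlag} (hy : ContinuousOn y.toFun (Icc 0 1)) {p : ℝ × ℝ}
    (hp : p ∈ y.graph) : p.2 = y.toFun p.1 := by
  rw [graph_eq_of_continuousOn hy] at hp
  obtain ⟨t, -, rfl⟩ := hp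
  rfl

section mul

variable {x z : Cadlag} {f : ℝ → ℝ} (hf : ContinuousOn f (Icc 0 1))
  (hz : ∀ t ∈ Icc (0:ℝ) 1, z.toFun t = x.toFun t * f t)
include hf hz

lemma llim_eq_llim_mul {t : ℝ} (ht : t ∈ Icc (0:ℝ) 1) : z.llim t = x.llim t * f t := by
  rcases ht.1.eq_or_lt with rfl | h0
  · simpa [llim] using hz 0 ht
  obtain ⟨L, hL⟩ := x.leftLimEx t ⟨h0, ht.2⟩
  rw [x.llim_eq_of_tendsto h0 hL]
  refine z.llim_eq_of_tendsto h0 <|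
    (hL.mul (tendsto_nhdsLT_of_continuousOn_Icc hf ⟨h0, ht.2⟩)).congr' ?_
  filter_upwards [Ioo_mem_nhdsLT h0] with s hs
  exact (hz s ⟨hs.1.le, hs.2.le.trans ht.2⟩).symm

lemma graph_eq_image_mul : z.graph = (fun p : ℝ × ℝ => (p.1, p.2 * f p.1)) '' x.graph := by
  ext ⟨t, w⟩
  simp only [graph, mem_ofPred_eq, mem_image, Prod.exists, Prod.mk.injEq]
  constructor
  · rintro ⟨ht, hw⟩
    rw [llim_eq_llim_mul hf hz ht, hz t ht, ← image_mul_const_segment] at hw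
    obtain ⟨v, hv, rfl⟩ := hw
    exact ⟨t, v, ⟨ht, hv⟩, rfl, rfl⟩
  · rintro ⟨t, v, ⟨ht, hv⟩, rfl, rfl⟩
    rw [llim_eq_llim_mul hf hz ht, hz t ht, ← image_mul_const_segment]
    exact ⟨ht, mem_image_of_mem _ hv⟩

end mul

end Cadlag

lemma InC0up.le_apply {y : Cadlag} (hy : InC0up y) {t : ℝ} (ht : t ∈ Icc (0:ℝ) 1) :
    y.toFun 0 ≤ y.toFun t :=
  hy.2.1 (left_mem_Icc.2 zero_le_one) ht ht.1

lemma InC0up.apply_pos {y : Cadlag} (hy : InC0up y) {t : ℝ} (ht : t ∈ Icc (0:ℝ) 1) :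
    0 < y.toFun t :=
  hy.2.2.trans_le (hy.le_apply ht)

namespace IsParamRep

variable {x : Cadlag} {r u : ℝ → ℝ}

lemma mem_graph (h : IsParamRep x r u) {s : ℝ} (hs : s ∈ Icc (0:ℝ) 1) :
    (r s, u s) ∈ x.graph :=
  h.2.2.2 ▸ mem_image_of_mem _ hs

lemma mapsTo (h : IsParamRep x r u) : MapsTo r (Icc 0 1) (Icc 0 1) :=
  fun _ hs => (h.mem_graph hs).1

lemma exists_bound (h : IsParamRep x r u) : ∃ M, 0 ≤ M ∧ ∀ p ∈ x.graph, |p.2| ≤ M := by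
  obtain ⟨M, hM⟩ := isCompact_Icc.exists_bound_of_continuousOn h.2.1
  refine ⟨max M 0, le_max_right _ _, ?_⟩
  rw [← h.2.2.2]
  rintro _ ⟨s, hs, rfl⟩
  exact le_max_of_le_left (hM s hs)

lemma mul {z : Cadlag} (h : IsParamRep x r u) {f : ℝ → ℝ} (hf : ContinuousOn f (Icc 0 1))
    (hz : ∀ t ∈ Icc (0:ℝ) 1, z.toFun t = x.toFun t * f t) :
    IsParamRep z r (fun s => u s * f (r s)) := by
  obtain ⟨hr, hu, hmono, himage⟩ := h
  refine ⟨hr, hu.mul (hf.comp hr (mapsTo ⟨hr, hu, hmono, himage⟩)), hmono, ?_⟩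
  rw [Cadlag.graph_eq_image_mul hf hz, ← himage, image_image]

lemma div_of_isQuot {y q : Cadlag} (h : IsParamRep x r u) (hy : InC0up y) (hq : IsQuot x y q) :
    IsParamRep q r (fun s => u s / y.toFun (r s)) := by
  simpa only [div_eq_mul_inv, Pi.inv_apply] using
    h.mul (hy.1.inv₀ fun _ ht => (hy.apply_pos ht).ne') fun t ht => by
      rw [hq t ht, div_eq_mul_inv, Pi.inv_apply]

lemma mul_of_isQuot {y q : Cadlag} (h : IsParamRep q r u) (hy : InC0up y) (hq : IsQuot x y q) :
    IsParamRep x r (fun s => u s * y.toFun (r s)) :=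
  h.mul hy.1 fun t ht => by rw [hq t ht, div_mul_cancel₀ _ (hy.apply_pos ht).ne']

lemma of_continuousOn {y : Cadlag} (hy : ContinuousOn y.toFun (Icc 0 1)) :
    IsParamRep y id y.toFun :=
  ⟨continuousOn_id, hy, monotoneOn_id, (Cadlag.graph_eq_of_continuousOn hy).symm⟩

end IsParamRep

lemma dM1_eq_zero_of_left {x x' : Cadlag} (h : ∀ r u, ¬ IsParamRep x r u) : dM1 x x' = 0 := by
  refine (congrArg sInf (eq_empty_of_forall_notMem ?_)).trans Real.sInf_empty
  rintro _ ⟨r, u, -, -, hr, -⟩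
  exact h r u hr

lemma dM1_eq_zero_of_right {x x' : Cadlag} (h : ∀ r u, ¬ IsParamRep x' r u) : dM1 x x' = 0 := by
  refine (congrArg sInf (eq_empty_of_forall_notMem ?_)).trans Real.sInf_empty
  rintro _ ⟨-, -, r, u, -, hr, -⟩
  exact h r u hr

lemma dM1_le_of_isParamRep {x x' : Cadlag} {r₁ u₁ r₂ u₂ : ℝ → ℝ} (h₁ : IsParamRep x r₁ u₁)
    (h₂ : IsParamRep x' r₂ u₂) {c : ℝ}
    (hc : ∀ s ∈ Icc (0:ℝ) 1, |r₁ s - r₂ s| ≤ c ∧ |u₁ s - u₂ s| ≤ c) : dM1 x x' ≤ c := by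
  have hbdd : BddBelow {d : ℝ | ∃ r₁ u₁ r₂ u₂ : ℝ → ℝ, IsParamRep x r₁ u₁ ∧
      IsParamRep x' r₂ u₂ ∧ d = ⨆ s : Icc (0:ℝ) 1, max |r₁ s - r₂ s| |u₁ s - u₂ s|} := by
    refine ⟨0, ?_⟩
    rintro _ ⟨-, -, -, -, -, -, rfl⟩
    exact Real.iSup_nonneg fun _ => (abs_nonneg _).trans (le_max_left _ _)
  exact (csInf_le hbdd ⟨r₁, u₁, r₂, u₂, h₁, h₂, rfl⟩).trans
    (ciSup_le fun s => max_le (hc s s.2).1 (hc s s.2).2)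

lemma exists_isParamRep_close_of_dM1_lt {x x' : Cadlag} {r u r' u' : ℝ → ℝ}
    (h : IsParamRep x r u) (h' : IsParamRep x' r' u') {δ : ℝ} (hδ : dM1 x x' < δ) :
    ∃ r₁ u₁ r₂ u₂ : ℝ → ℝ, IsParamRep x r₁ u₁ ∧ IsParamRep x' r₂ u₂ ∧
      ∀ s ∈ Icc (0:ℝ) 1, |r₁ s - r₂ s| < δ ∧ |u₁ s - u₂ s| < δ := by
  obtain ⟨_, ⟨r₁, u₁, r₂, u₂, h₁, h₂, rfl⟩, hlt⟩ :=
    exists_lt_of_csInf_lt (by exact ⟨_, r, u, r', u', h, h', rfl⟩) hδ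
  refine ⟨r₁, u₁, r₂, u₂, h₁, h₂, fun s hs => max_lt_iff.1 ?_⟩
  have hcont : ContinuousOn (fun s => max |r₁ s - r₂ s| |u₁ s - u₂ s|) (Icc 0 1) := by
    have := h₁.1; have := h₁.2.1; have := h₂.1; have := h₂.2.1
    fun_prop
  exact (le_ciSup (isCompact_range hcont.domRestrict).bddAbove ⟨s, hs⟩).trans_lt hlt

lemma abs_sub_lt_of_isParamRep_close {y y' : Cadlag} (hy : ContinuousOn y.toFun (Icc 0 1))
    {ρ v ρ' v' : ℝ → ℝ} (h : IsParamRep y ρ v) (h' : IsParamRep y' ρ' v') {δ β : ℝ}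
    (hclose : ∀ s ∈ Icc (0:ℝ) 1, |ρ s - ρ' s| < δ ∧ |v s - v' s| < δ)
    (huc : ∀ a ∈ Icc (0:ℝ) 1, ∀ b ∈ Icc (0:ℝ) 1, dist a b < δ →
      dist (y.toFun a) (y.toFun b) < β)
    {t : ℝ} (ht : t ∈ Icc (0:ℝ) 1) : |y'.toFun t - y.toFun t| < δ + β := by
  obtain ⟨s, hs, hst⟩ : (t, y'.toFun t) ∈ (fun s => (ρ' s, v' s)) '' Icc 0 1 :=
    h'.2.2.2 ▸ y'.mem_graph ht
  obtain ⟨rfl, hv'⟩ := Prod.mk.inj hst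
  have hv : v s = y.toFun (ρ s) := Cadlag.eq_of_mem_graph hy (h.mem_graph hs)
  obtain ⟨hρ, hvv⟩ := hclose s hs
  have hvv' : |y'.toFun (ρ' s) - y.toFun (ρ s)| < δ := by
    rwa [← hv', ← hv, abs_sub_comm]
  have hyρ := huc _ (h.mapsTo hs) _ (h'.mapsTo hs) (by rwa [Real.dist_eq])
  rw [Real.dist_eq] at hyρ
  calc |y'.toFun (ρ' s) - y.toFun (ρ' s)|
      ≤ |y'.toFun (ρ' s) - y.toFun (ρ s)| + |y.toFun (ρ s) - y.toFun (ρ' s)| :=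
        abs_sub_le _ _ _
    _ < δ + β := add_lt_add hvv' hyρ

lemma exists_abs_sub_lt_of_dM1_lt {y : Cadlag} (hy : ContinuousOn y.toFun (Icc 0 1)) {γ : ℝ}
    (hγ : 0 < γ) : ∃ δ > 0, ∀ y' : Cadlag, ContinuousOn y'.toFun (Icc 0 1) → dM1 y y' < δ →
      ∀ t ∈ Icc (0:ℝ) 1, ∀ t' ∈ Icc (0:ℝ) 1, |t - t'| < δ → |y'.toFun t - y.toFun t'| < γ := by
  obtain ⟨η, hη, huc⟩ := Metric.uniformContinuousOn_iff.1
    (isCompact_Icc.uniformContinuousOn_of_continuous hy) (γ / 3) (by positivity)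
  refine ⟨min η (γ / 3), by positivity, fun y' hy' hd t ht t' ht' htt' => ?_⟩
  obtain ⟨ρ, v, ρ', v', h, h', hclose⟩ :=
    exists_isParamRep_close_of_dM1_lt (.of_continuousOn hy) (.of_continuousOn hy') hd
  have hyy' := abs_sub_lt_of_isParamRep_close hy h h' hclose
    (fun a ha b hb hab => huc a ha b hb (hab.trans_le (min_le_left _ _))) ht
  have hytt' := huc t ht t' ht' (by rw [Real.dist_eq]; exact htt'.trans_le (min_le_left _ _))
  rw [Real.dist_eq] at hytt'
  calc |y'.toFun t - y.toFun t'| ≤ |y'.toFun t - y.toFun t| + |y.toFun t - y.toFun t'| :=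
        abs_sub_le _ _ _
    _ < (min η (γ / 3) + γ / 3) + γ / 3 := add_lt_add hyy' hytt'
    _ ≤ γ := by linarith [min_le_right η (γ / 3)]

lemma abs_div_sub_div_lt {u u' a b c M γ : ℝ} (hc : 0 < c) (ha : c ≤ a) (hu : |u| ≤ M)
    (hγ : γ ≤ c / 2) (huu' : |u - u'| < γ) (hab : |b - a| < γ) :
    |u / a - u' / b| < (2 / c + 2 * M / c ^ 2) * γ := by
  have ha₀ : 0 < a := hc.trans_le ha
  have hb : c / 2 ≤ b := by linarith [(abs_lt.1 hab).1]
  have hb₀ : 0 < b := by linarith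
  have hM₀ : 0 ≤ M := (abs_nonneg _).trans hu
  have hγ₀ : 0 ≤ γ := ((abs_nonneg _).trans_lt huu').le
  have hsplit : u / a - u' / b = (u - u') / b + u * (b - a) / (a * b) := by
    field_simp
    ring
  calc |u / a - u' / b| ≤ |u - u'| / b + |u| * |b - a| / (a * b) := by
        rw [hsplit]
        refine (abs_add_le _ _).trans_eq ?_
        rw [abs_div, abs_div, abs_mul, abs_of_pos hb₀, abs_of_pos (mul_pos ha₀ hb₀)]
    _ < γ / (c / 2) + M * γ / (c * (c / 2)) := by
        refine add_lt_add_of_lt_of_le ((div_le_div_of_nonneg_left (abs_nonneg _) (by positivity)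
          hb).trans_lt (div_lt_div_of_pos_right huu' (by positivity))) ?_
        exact div_le_div₀ (mul_nonneg hM₀ hγ₀) (mul_le_mul hu hab.le (abs_nonneg _) hM₀)
          (by positivity) (mul_le_mul ha hb (by positivity) ha₀.le)
    _ = (2 / c + 2 * M / c ^ 2) * γ := by field_simp

lemma exists_abs_div_sub_div_lt {c M ε : ℝ} (hc : 0 < c) (hM : 0 ≤ M) (hε : 0 < ε) :
    ∃ γ > 0, ∀ u u' a b : ℝ, c ≤ a → |u| ≤ M → |u - u'| < γ → |b - a| < γ →
      |u / a - u' / b| < ε := by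
  have hK : 0 < 2 / c + 2 * M / c ^ 2 := by positivity
  refine ⟨min (c / 2) (ε / (2 / c + 2 * M / c ^ 2)), by positivity,
    fun u u' a b ha hu huu' hab => ?_⟩
  exact (abs_div_sub_div_lt hc ha hu (min_le_left _ _) huu' hab).trans_le
    ((le_div_iff₀' hK).1 (min_le_right _ _))

/-- Lemma 2.1: the division map `h(x,y) = x / y` from
`D([0,1],ℝ) × C₀↑([0,1],ℝ)` (with the product of `M₁` metrics, i.e. the weak `M₁`
topology) to `D([0,1],ℝ)` with the `M₁` metric is continuous. -/
theorem stmt11 (x y q : Cadlag) (hy : InC0up y) (hq : IsQuot x y q) :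
    ∀ ε > (0:ℝ), ∃ δ > (0:ℝ), ∀ x' y' q' : Cadlag, InC0up y' → IsQuot x' y' q' →
      max (dM1 x x') (dM1 y y') < δ → dM1 q q' < ε := by
  intro ε hε
  by_cases hx : ∃ r u, IsParamRep x r u
  swap
  · refine ⟨1, one_pos, fun x' y' q' _ _ _ => ?_⟩
    rw [dM1_eq_zero_of_left fun r u hr => hx ⟨r, _, hr.mul_of_isQuot hy hq⟩]
    exact hε
  obtain ⟨r, u, hxr⟩ := hx
  obtain ⟨M, hM₀, hM⟩ := hxr.exists_bound
  obtain ⟨γ, hγ, hdiv⟩ := exists_abs_div_sub_div_lt hy.2.2 hM₀ (half_pos hε)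
  obtain ⟨η, hη, hyy'⟩ := exists_abs_sub_lt_of_dM1_lt hy.1 hγ
  set δ := min (min η γ) (ε / 2)
  have hδη : δ ≤ η := (min_le_left _ _).trans (min_le_left _ _)
  have hδγ : δ ≤ γ := (min_le_left _ _).trans (min_le_right _ _)
  refine ⟨δ, by positivity, fun x' y' q' hy' hq' hd => ?_⟩
  by_cases hq'r : ∃ r u, IsParamRep q' r u
  swap
  · rw [dM1_eq_zero_of_right fun r u hr => hq'r ⟨r, u, hr⟩]
    exact hε
  obtain ⟨r', u', hq'r⟩ := hq'r
  obtain ⟨r₁, u₁, r₂, u₂, h₁, h₂, hclose⟩ := exists_isParamRep_close_of_dM1_lt hxr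
    (hq'r.mul_of_isQuot hy' hq') ((le_max_left _ _).trans_lt hd)
  refine (dM1_le_of_isParamRep (h₁.div_of_isQuot hy hq) (h₂.div_of_isQuot hy' hq')
    fun s hs => ?_).trans_lt (half_lt_self hε)
  obtain ⟨hr, hu⟩ := hclose s hs
  have hy'y : |y'.toFun (r₂ s) - y.toFun (r₁ s)| < γ :=
    hyy' y' hy'.1 (((le_max_right _ _).trans_lt hd).trans_le hδη) _ (h₂.mapsTo hs) _
      (h₁.mapsTo hs) (abs_sub_comm (r₁ s) _ ▸ hr.trans_le hδη)
  exact ⟨(hr.trans_le (min_le_right _ _)).le, (hdiv _ _ _ _ (hy.le_apply (h₁.mapsTo hs))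
    (hM _ (h₁.mem_graph hs)) (hu.trans_le hδγ) hy'y).le⟩
end

section
/- Let f : D([0,1],ℝ) × C_m([0,1],ℝ) → D([0,1],ℝ) × C_m([0,1],ℝ) be defined by f(x,y) = (x, ŷ(1)), where ŷ(1) denotes the constant function t ↦ y(1), and C_m([0,1],ℝ) is the set of continuous monotone functions y on [0,1] with y(0) ≥ 0. Then f is continuous with respect to the weak M₁ topology (product topology induced by d_p) on both sides. -/
open Set Filter

/-- Membership in `C_m([0,1],ℝ)`: continuous, monotone, nonnegative at `0`. -/
def InCm (y : Cadlag) : Prop :=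
  ContinuousOn y.toFun (Set.Icc 0 1) ∧
    (MonotoneOn y.toFun (Set.Icc 0 1) ∨ AntitoneOn y.toFun (Set.Icc 0 1)) ∧
    0 ≤ y.toFun 0

/-- The constant càdlàg function `t ↦ a`. -/
noncomputable def constCadlag (a : ℝ) : Cadlag :=
  ⟨fun _ => a, fun _ _ => continuousWithinAt_const, fun _ _ => ⟨a, tendsto_const_nhds⟩⟩

/- The endpoint `t = 1` is fixed by every parametric representation: its time component is
monotone and onto `[0,1]`, so it sends `1` to `1`, and for a continuous path the completed
graph over `t = 1` is the single point `(1, y(1))`. Comparing two representations at `s = 1`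
therefore bounds `|y(1) - y'(1)|` by `d_{M₁}(y, y')`, while two constant paths `a`, `b` are
at `M₁`-distance at most `|a - b|`. -/

open Topology

lemma Cadlag.llim_eq_of_continuousOn_s12 {x : Cadlag} (hx : ContinuousOn x.toFun (Icc 0 1))
    {t : ℝ} (ht : t ∈ Icc (0:ℝ) 1) : x.llim t = x.toFun t := by
  rcases eq_or_ne t 0 with rfl | ht0
  · simp [Cadlag.llim]
  have htpos : 0 < t := lt_of_le_of_ne ht.1 ht0.symm
  have hleft : Tendsto x.toFun (𝓝[<] t) (𝓝 (x.toFun t)) := by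
    have := (hx t ht).mono (Ioo_subset_Icc_self.trans (Icc_subset_Icc le_rfl ht.2))
    rwa [ContinuousWithinAt, nhdsWithin_Ioo_eq_nhdsLT htpos] at this
  simp only [Cadlag.llim, if_neg ht0]
  exact leftLim_eq_of_tendsto hleft

lemma Cadlag.graph_eq_of_continuousOn_s12 {x : Cadlag} (hx : ContinuousOn x.toFun (Icc 0 1)) :
    x.graph = {p : ℝ × ℝ | p.1 ∈ Icc (0:ℝ) 1 ∧ p.2 = x.toFun p.1} := by
  ext ⟨t, v⟩
  simp only [Cadlag.graph, mem_ofPred_eq]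
  refine and_congr_right fun ht => ?_
  rw [x.llim_eq_of_continuousOn_s12 hx ht, segment_same, mem_singleton_iff]

lemma Cadlag.isParamRep_id {x : Cadlag} (hx : ContinuousOn x.toFun (Icc 0 1)) :
    IsParamRep x id x.toFun := by
  refine ⟨continuousOn_id, hx, monotoneOn_id, ?_⟩
  rw [x.graph_eq_of_continuousOn_s12 hx]
  ext ⟨t, v⟩
  constructor
  · rintro ⟨s, hs, hst⟩
    simp only [id, Prod.mk.injEq] at hst
    obtain ⟨rfl, rfl⟩ := hst
    exact ⟨hs, rfl⟩
  · rintro ⟨ht, hv⟩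
    exact ⟨t, ht, Prod.ext rfl hv.symm⟩

lemma IsParamRep.apply_one_eq_one {x : Cadlag} {r u : ℝ → ℝ} (h : IsParamRep x r u) :
    r 1 = 1 := by
  obtain ⟨-, -, hmono, himage⟩ := h
  have h1 : (1:ℝ) ∈ Icc (0:ℝ) 1 := right_mem_Icc.2 zero_le_one
  have hr1 : (r 1, u 1) ∈ x.graph := himage ▸ mem_image_of_mem _ h1
  have hend : ((1:ℝ), x.toFun 1) ∈ x.graph := ⟨h1, right_mem_segment ℝ _ _⟩
  rw [← himage] at hend
  obtain ⟨s, hs, hrs⟩ := hend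
  have hrs1 : r s = 1 := congrArg Prod.fst hrs
  exact le_antisymm hr1.1.2 (hrs1.symm.le.trans (hmono hs h1 hs.2))

lemma IsParamRep.apply_one_eq_of_continuousOn {x : Cadlag}
    (hx : ContinuousOn x.toFun (Icc 0 1)) {r u : ℝ → ℝ} (h : IsParamRep x r u) :
    u 1 = x.toFun 1 := by
  have hr1 : (r 1, u 1) ∈ x.graph := h.2.2.2 ▸ mem_image_of_mem _ (right_mem_Icc.2 zero_le_one)
  rw [x.graph_eq_of_continuousOn_s12 hx] at hr1
  simpa only [h.apply_one_eq_one] using hr1.2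

lemma abs_sub_apply_one_le_dM1 {y y' : Cadlag} (hy : ContinuousOn y.toFun (Icc 0 1))
    (hy' : ContinuousOn y'.toFun (Icc 0 1)) :
    |y.toFun 1 - y'.toFun 1| ≤ dM1 y y' := by
  refine le_csInf ⟨_, id, y.toFun, id, y'.toFun, y.isParamRep_id hy, y'.isParamRep_id hy', rfl⟩ ?_
  rintro d ⟨r₁, u₁, r₂, u₂, h₁, h₂, rfl⟩
  have hcont : Continuous fun s : Icc (0:ℝ) 1 => max |r₁ s - r₂ s| |u₁ s - u₂ s| :=
    ((h₁.1.domRestrict.sub h₂.1.domRestrict).abs).max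
      ((h₁.2.1.domRestrict.sub h₂.2.1.domRestrict).abs)
  calc |y.toFun 1 - y'.toFun 1| = |u₁ 1 - u₂ 1| := by
        rw [h₁.apply_one_eq_of_continuousOn hy, h₂.apply_one_eq_of_continuousOn hy']
    _ ≤ max |r₁ 1 - r₂ 1| |u₁ 1 - u₂ 1| := le_max_right _ _
    _ ≤ ⨆ s : Icc (0:ℝ) 1, max |r₁ s - r₂ s| |u₁ s - u₂ s| :=
        le_ciSup (isCompact_range hcont).bddAbove ⟨1, right_mem_Icc.2 zero_le_one⟩

lemma dM1_constCadlag_le (a b : ℝ) : dM1 (constCadlag a) (constCadlag b) ≤ |a - b| := by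
  have : Nonempty (Icc (0:ℝ) 1) := ⟨⟨0, left_mem_Icc.2 zero_le_one⟩⟩
  refine csInf_le ⟨0, ?_⟩ ⟨id, fun _ => a, id, fun _ => b,
    (constCadlag a).isParamRep_id continuousOn_const,
    (constCadlag b).isParamRep_id continuousOn_const, ?_⟩
  · rintro d ⟨r₁, u₁, r₂, u₂, -, -, rfl⟩
    exact Real.iSup_nonneg fun s => le_max_of_le_left (abs_nonneg _)
  · simp

/-- Lemma 2.2: the map `f(x,y) = (x, ŷ(1))`, where `ŷ(1)` is the
constant path with value `y(1)`, is continuous from `D([0,1],ℝ) × C_m([0,1],ℝ)` to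
`D([0,1],ℝ) × C_m([0,1],ℝ)` with the weak `M₁` (product) topology on both sides. -/
theorem stmt12 (x y : Cadlag) (hy : InCm y) :
    ∀ ε > (0:ℝ), ∃ δ > (0:ℝ), ∀ x' y' : Cadlag, InCm y' →
      max (dM1 x x') (dM1 y y') < δ →
      max (dM1 x x') (dM1 (constCadlag (y.toFun 1)) (constCadlag (y'.toFun 1))) < ε := by
  intro ε hε
  refine ⟨ε, hε, fun x' y' hy' hlt => max_lt_iff.2 ⟨(max_lt_iff.1 hlt).1, ?_⟩⟩
  calc dM1 (constCadlag (y.toFun 1)) (constCadlag (y'.toFun 1))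
      ≤ |y.toFun 1 - y'.toFun 1| := dM1_constCadlag_le _ _
    _ ≤ dM1 y y' := abs_sub_apply_one_le_dM1 hy.1 hy'.1
    _ < ε := (max_lt_iff.1 hlt).2
end
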